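/- Let n ≥ 4 be an even integer and let W_n be the wheel graph on n+1 vertices. Then for every set F of edges of W_n such that W_n − F has no isolated vertices, γ_t(W_n − F) ≤ γ_t(W_n) + (n−2) = n; moreover b_t^{n−2}(W_n) = 2n − (n+4)/2. -/

import Mathlib

open SimpleGraph

/-- A set `S` of vertices is a total dominating set of `G` if every vertex of `G`
is adjacent to at least one vertex of `S`. -/
def IsTotalDominatingSet {V : Type*} (G : SimpleGraph V) (S : Set V) : Prop :=
  ∀ v : V, ∃ u ∈ S, G.Adj v u

/-- The total domination number of `G`: the minimum cardinality of a total
dominating set of `G`. -/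
noncomputable def totalDominationNumber {V : Type*} (G : SimpleGraph V) : ℕ :=
  sInf {n : ℕ | ∃ S : Set V, S.ncard = n ∧ IsTotalDominatingSet G S}

/-- A graph has no isolated vertices if every vertex has a neighbor. -/
def NoIsolatedVerts {V : Type*} (G : SimpleGraph V) : Prop :=
  ∀ v : V, ∃ u : V, G.Adj v u

/-- The `k`-total bondage number of `G`: the minimum cardinality of a set `F` of
edges of `G` such that `G − F` has no isolated vertices and the total domination
number of `G − F` is at least `γ_t(G) + k`. -/
noncomputable def kTotalBondage {V : Type*} (G : SimpleGraph V) (k : ℕ) : ℕ :=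
  sInf {m : ℕ | ∃ F : Set (Sym2 V), F ⊆ G.edgeSet ∧ F.ncard = m ∧
    NoIsolatedVerts (G.deleteEdges F) ∧
    totalDominationNumber G + k ≤ totalDominationNumber (G.deleteEdges F)}

/-- The wheel graph `W_n` on `n + 1` vertices: a hub vertex (`none`) joined to
every vertex of a cycle `C_n` (the vertices `some i`). -/
def wheelGraph (n : ℕ) : SimpleGraph (Option (Fin n)) :=
  SimpleGraph.fromRel (fun v w =>
    v = none ∨ ∃ i j : Fin n, v = some i ∧ w = some j ∧ (cycleGraph n).Adj i j)

/-!
A graph of odd order without isolated vertices has a vertex `v` such that `V ∖ {v}` totally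
dominates: otherwise every vertex is the unique neighbour of some vertex, so every degree is 1
and the order is even. This bounds `γ_t(W_n − F)` by `n`.

If `γ_t(H) ≥ |V| − 1`, no complement of a pair totally dominates, so every pair `{v, w}`
contains the neighbourhood of some vertex. Let `b` be the number of vertices adjacent to no
leaf. Each pair of them is then exactly the neighbourhood of some non-leaf, and every vertex
adjacent to a leaf has a leaf of its own, so `C(b, 2) ≤ #non-leaves ≤ b`. Hence `b ≤ 3`, all
degrees are at most 2, and `2|E(H)| ≤ |V| + 3`. For `H = W_n − F` this gives
`|F| ≥ 2n − (n + 4)/2`. Equality is attained by keeping only the triangle on the hub and the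
rim vertices `0, 1` together with the rim edges `{2k, 2k + 1}`: each of these `n/2` cliques
must contain two vertices of any total dominating set.
-/

open Finset

section TotalDomination

variable {V : Type*} {G : SimpleGraph V}

theorem totalDominationNumber_le {S : Set V} (hS : IsTotalDominatingSet G S) :
    totalDominationNumber G ≤ S.ncard :=
  Nat.sInf_le ⟨S, rfl, hS⟩

theorem isTotalDominatingSet_univ (hG : NoIsolatedVerts G) : IsTotalDominatingSet G Set.univ :=
  fun v ↦ (hG v).imp fun _ h ↦ ⟨Set.mem_univ _, h⟩

theorem le_totalDominationNumber {m : ℕ} (hG : NoIsolatedVerts G)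
    (h : ∀ S, IsTotalDominatingSet G S → m ≤ S.ncard) : m ≤ totalDominationNumber G :=
  le_csInf ⟨_, _, rfl, isTotalDominatingSet_univ hG⟩ fun _ ⟨S, hcard, hS⟩ ↦ hcard ▸ h S hS

theorem not_isTotalDominatingSet_compl_iff {S : Set V} :
    ¬ IsTotalDominatingSet G Sᶜ ↔ ∃ u, G.neighborSet u ⊆ S := by
  simp only [IsTotalDominatingSet, Set.mem_compl_iff, not_forall, not_exists, not_and,
    Set.subset_def, mem_neighborSet]
  exact exists_congr fun u ↦ forall_congr' fun y ↦ by tauto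

theorem two_le_ncard_of_isTotalDominatingSet [Finite V] [Nonempty V] {S : Set V}
    (hS : IsTotalDominatingSet G S) : 2 ≤ S.ncard := by
  obtain ⟨u, hu, -⟩ := hS (Classical.arbitrary V)
  obtain ⟨w, hw, huw⟩ := hS u
  exact (Set.ncard_pair huw.ne).symm.le.trans (Set.ncard_le_ncard (by grind))

theorem kTotalBondage_eq {k m : ℕ}
    (hex : ∃ F ⊆ G.edgeSet, F.ncard ≤ m ∧ NoIsolatedVerts (G.deleteEdges F) ∧
      totalDominationNumber G + k ≤ totalDominationNumber (G.deleteEdges F))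
    (hle : ∀ F ⊆ G.edgeSet, NoIsolatedVerts (G.deleteEdges F) →
      totalDominationNumber G + k ≤ totalDominationNumber (G.deleteEdges F) → m ≤ F.ncard) :
    kTotalBondage G k = m := by
  obtain ⟨F₀, hF₀, hcard₀, hG₀, hγ₀⟩ := hex
  rw [kTotalBondage]
  have hmem : F₀.ncard ∈ {m | ∃ F ⊆ G.edgeSet, F.ncard = m ∧ NoIsolatedVerts (G.deleteEdges F) ∧
      totalDominationNumber G + k ≤ totalDominationNumber (G.deleteEdges F)} :=
    ⟨F₀, hF₀, rfl, hG₀, hγ₀⟩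
  refine le_antisymm ((Nat.sInf_le hmem).trans hcard₀) (le_csInf ⟨_, hmem⟩ ?_)
  rintro _ ⟨F, hF, rfl, hG, hγF⟩
  exact hle F hF hG hγF

end TotalDomination

section Leaves

variable {V : Type*} [Fintype V] {G : SimpleGraph V} [DecidableRel G.Adj]

variable (G) in
def leafFinset : Finset V := {u | G.degree u = 1}

@[simp]
theorem mem_leafFinset {u : V} : u ∈ leafFinset G ↔ G.degree u = 1 := by
  simp [leafFinset]

theorem neighborFinset_eq_singleton_of_degree_eq_one {y u : V} (hy : G.degree y = 1)
    (h : G.Adj y u) : G.neighborFinset y = {u} := by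
  obtain ⟨a, ha⟩ := card_eq_one.mp ((card_neighborFinset_eq_degree G y).trans hy)
  have hu : u ∈ G.neighborFinset y := (mem_neighborFinset _ _ _).mpr h
  rw [ha, mem_singleton] at hu
  rw [ha, hu]

variable [DecidableEq V]

variable (G) in
def leafSupportFinset : Finset V := {x | ∃ u, G.neighborFinset u = {x}}

@[simp]
theorem mem_leafSupportFinset {x : V} :
    x ∈ leafSupportFinset G ↔ ∃ u, G.neighborFinset u = {x} := by
  simp [leafSupportFinset]

theorem card_leafSupportFinset_le : #(leafSupportFinset G) ≤ #(leafFinset G) := by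
  calc #(leafSupportFinset G) ≤ #((leafFinset G).biUnion fun u ↦ G.neighborFinset u) := by
        refine card_le_card fun x hx ↦ ?_
        obtain ⟨u, hu⟩ := mem_leafSupportFinset.mp hx
        have hu' : u ∈ leafFinset G := by simp [← card_neighborFinset_eq_degree, hu]
        exact mem_biUnion.mpr ⟨u, hu', by simp [hu]⟩
    _ ≤ ∑ u ∈ leafFinset G, G.degree u := card_biUnion_le
    _ = #(leafFinset G) := by
        rw [sum_congr rfl fun u hu ↦ mem_leafFinset.mp hu, sum_const, smul_eq_mul, mul_one]

theorem card_compl_leafFinset_le : #(leafFinset G)ᶜ ≤ #(leafSupportFinset G)ᶜ := by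
  simp only [card_compl]
  have := card_leafSupportFinset_le (G := G)
  omega

theorem exists_isTotalDominatingSet_compl_singleton (hodd : Odd (Fintype.card V))
    (hG : NoIsolatedVerts G) : ∃ v, IsTotalDominatingSet G {v}ᶜ := by
  by_contra! h
  have hsupp : leafSupportFinset G = univ := by
    refine eq_univ_of_forall fun v ↦ mem_leafSupportFinset.mpr ?_
    obtain ⟨u, hu⟩ := not_isTotalDominatingSet_compl_iff.mp (h v)
    obtain ⟨y, hy⟩ := hG u
    refine ⟨u, eq_singleton_iff_unique_mem.mpr ⟨?_, fun z hz ↦ hu (by simpa using hz)⟩⟩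
    simpa [show y = v from hu hy] using hy
  have hleaf : leafFinset G = univ :=
    eq_of_subset_of_card_le (subset_univ _) (hsupp ▸ card_leafSupportFinset_le)
  have hsum : ∑ v, G.degree v = Fintype.card V := by
    simp [sum_congr rfl fun v _ ↦ mem_leafFinset.mp (hleaf ▸ mem_univ v)]
  rw [sum_degrees_eq_twice_card_edges] at hsum
  exact Nat.not_even_iff_odd.mpr hodd ⟨#G.edgeFinset, by omega⟩

theorem totalDominationNumber_le_card_sub_one (hodd : Odd (Fintype.card V))
    (hG : NoIsolatedVerts G) : totalDominationNumber G ≤ Fintype.card V - 1 := by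
  obtain ⟨v, hv⟩ := exists_isTotalDominatingSet_compl_singleton hodd hG
  have h := totalDominationNumber_le hv
  rwa [Set.ncard_compl, Set.ncard_singleton, Nat.card_eq_fintype_card] at h

end Leaves

section PairsContainNeighborhoods

variable {V : Type*} [Fintype V] [DecidableEq V] {G : SimpleGraph V} [DecidableRel G.Adj]

theorem neighborFinset_subset_of_adj_leaves (hG : NoIsolatedVerts G)
    (hpair : ∀ v w, v ≠ w → ∃ u, G.neighborFinset u ⊆ {v, w}) {u y₁ y₂ : V} (hne : y₁ ≠ y₂)
    (h₁ : G.Adj u y₁) (h₂ : G.Adj u y₂) (hy₁ : G.degree y₁ = 1) (hy₂ : G.degree y₂ = 1) :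
    G.neighborFinset u ⊆ {y₁, y₂} := by
  obtain ⟨p, hp⟩ := hpair y₁ y₂ hne
  obtain ⟨z, hz⟩ := hG p
  suffices p = u from this ▸ hp
  have hz' : z = y₁ ∨ z = y₂ := by simpa using hp ((mem_neighborFinset _ _ _).mpr hz)
  have hpz : p ∈ G.neighborFinset z := (mem_neighborFinset _ _ _).mpr hz.symm
  rcases hz' with rfl | rfl
  · simpa [neighborFinset_eq_singleton_of_degree_eq_one hy₁ h₁.symm] using hpz
  · simpa [neighborFinset_eq_singleton_of_degree_eq_one hy₂ h₂.symm] using hpz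

theorem powersetCard_two_compl_leafSupportFinset_subset (hG : NoIsolatedVerts G)
    (hpair : ∀ v w, v ≠ w → ∃ u, G.neighborFinset u ⊆ {v, w}) :
    powersetCard 2 (leafSupportFinset G)ᶜ ⊆
      (leafFinset G)ᶜ.image fun u ↦ G.neighborFinset u := by
  intro s hs
  obtain ⟨hsub, hcard⟩ := mem_powersetCard.mp hs
  obtain ⟨v, w, hvw, rfl⟩ := card_eq_two.mp hcard
  have hv : ∀ u, G.neighborFinset u ≠ {v} := by simpa using hsub (mem_insert_self v {w})
  have hw : ∀ u, G.neighborFinset u ≠ {w} := by simpa using hsub (by simp)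
  obtain ⟨u, hu⟩ := hpair v w hvw
  obtain ⟨y, hy⟩ := hG u
  have hN : G.neighborFinset u = {v, w} := by
    have hne : (G.neighborFinset u : Set V).Nonempty := ⟨y, by simpa using hy⟩
    have := (hne.subset_pair_iff_eq (a := v) (b := w)).mp (by simpa using coe_subset.mpr hu)
    rcases this with h | h | h
    exacts [absurd (mod_cast h) (hv u), absurd (mod_cast h) (hw u), mod_cast h]
  refine mem_image.mpr ⟨u, ?_, hN⟩
  simp [← card_neighborFinset_eq_degree, hN, hvw]

theorem card_compl_leafSupportFinset_le_three (hG : NoIsolatedVerts G)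
    (hpair : ∀ v w, v ≠ w → ∃ u, G.neighborFinset u ⊆ {v, w}) :
    #(leafSupportFinset G)ᶜ ≤ 3 := by
  set b := #(leafSupportFinset G)ᶜ
  have hchoose : b.choose 2 ≤ b :=
    calc b.choose 2 = #(powersetCard 2 (leafSupportFinset G)ᶜ) := (card_powersetCard _ _).symm
      _ ≤ #((leafFinset G)ᶜ.image fun u ↦ G.neighborFinset u) :=
        card_le_card (powersetCard_two_compl_leafSupportFinset_subset hG hpair)
      _ ≤ #(leafFinset G)ᶜ := card_image_le
      _ ≤ b := card_compl_leafFinset_le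
  by_contra! hb
  have : b * 3 ≤ b * (b - 1) := Nat.mul_le_mul_left b (by omega)
  rw [Nat.choose_two_right] at hchoose
  omega

theorem three_le_card_compl_leafFinset_of_three_le_degree (hG : NoIsolatedVerts G)
    (hpair : ∀ v w, v ≠ w → ∃ u, G.neighborFinset u ⊆ {v, w}) {u : V} (hu : 3 ≤ G.degree u) :
    3 ≤ #(leafFinset G)ᶜ := by
  have hleaves : #{y ∈ G.neighborFinset u | G.degree y = 1} ≤ 1 := by
    by_contra! h
    obtain ⟨y₁, hy₁, y₂, hy₂, hne⟩ := one_lt_card.mp h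
    simp only [mem_filter, mem_neighborFinset] at hy₁ hy₂
    have := card_le_card
      (neighborFinset_subset_of_adj_leaves hG hpair hne hy₁.1 hy₂.1 hy₁.2 hy₂.2)
    have := card_insert_le y₁ {y₂}
    simp only [card_neighborFinset_eq_degree, card_singleton] at *
    omega
  have hsub : insert u {y ∈ G.neighborFinset u | ¬ G.degree y = 1} ⊆ (leafFinset G)ᶜ := by
    intro y hy
    rcases mem_insert.mp hy with rfl | hy
    · simp only [mem_compl, mem_leafFinset]; omega
    · simp_all
  have hsplit := card_filter_add_card_filter_not
    (s := G.neighborFinset u) (p := fun y ↦ G.degree y = 1)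
  rw [card_neighborFinset_eq_degree] at hsplit
  have := card_le_card hsub
  rw [card_insert_of_notMem (by simp)] at this
  omega

theorem degree_le_two (hG : NoIsolatedVerts G)
    (hpair : ∀ v w, v ≠ w → ∃ u, G.neighborFinset u ⊆ {v, w}) (u : V) : G.degree u ≤ 2 := by
  by_contra! hu
  have hM := three_le_card_compl_leafFinset_of_three_le_degree hG hpair hu
  have hb := card_compl_leafSupportFinset_le_three hG hpair
  have hMb := card_compl_leafFinset_le (G := G)
  -- now `b = 3`: the three non-leaves have the three pairs of non-supports as neighbourhoods
  have heq : powersetCard 2 (leafSupportFinset G)ᶜ =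
      (leafFinset G)ᶜ.image fun u ↦ G.neighborFinset u := by
    refine eq_of_subset_of_card_le (powersetCard_two_compl_leafSupportFinset_subset hG hpair) ?_
    rw [card_powersetCard, show #(leafSupportFinset G)ᶜ = 3 by omega]
    exact card_image_le.trans (by rw [show Nat.choose 3 2 = 3 from rfl]; omega)
  have hmem : G.neighborFinset u ∈ powersetCard 2 (leafSupportFinset G)ᶜ :=
    heq ▸ mem_image_of_mem _ (by simp only [mem_compl, mem_leafFinset]; omega)
  have := (mem_powersetCard.mp hmem).2
  rw [card_neighborFinset_eq_degree] at this
  omega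

theorem sum_degrees_le_card_add_three (hG : NoIsolatedVerts G)
    (hpair : ∀ v w, v ≠ w → ∃ u, G.neighborFinset u ⊆ {v, w}) :
    ∑ v, G.degree v ≤ Fintype.card V + 3 := by
  have hleaf : ∑ v ∈ leafFinset G, G.degree v = #(leafFinset G) :=
    (sum_congr rfl fun v hv ↦ mem_leafFinset.mp hv).trans (by simp)
  have hnonleaf : ∑ v ∈ (leafFinset G)ᶜ, G.degree v ≤ 2 * #(leafFinset G)ᶜ :=
    (sum_le_sum fun v _ ↦ degree_le_two hG hpair v).trans (by simp [mul_comm])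
  have hcard : #(leafFinset G) + #(leafFinset G)ᶜ = Fintype.card V := card_add_card_compl _
  have hb := card_compl_leafSupportFinset_le_three hG hpair
  have hMb := card_compl_leafFinset_le (G := G)
  rw [← sum_add_sum_compl (leafFinset G)]
  omega

theorem two_mul_card_edgeFinset_le (hG : NoIsolatedVerts G)
    (hγ : Fintype.card V - 1 ≤ totalDominationNumber G) :
    2 * #G.edgeFinset ≤ Fintype.card V + 3 := by
  refine (sum_degrees_eq_twice_card_edges G).symm.le.trans (sum_degrees_le_card_add_three hG ?_)
  intro v w hvw
  have hS : ¬ IsTotalDominatingSet G {v, w}ᶜ := fun hS ↦ by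
    have hle := totalDominationNumber_le hS
    have htwo : 2 ≤ Fintype.card V := card_pair hvw ▸ card_le_univ {v, w}
    rw [Set.ncard_compl, Set.ncard_pair hvw, Nat.card_eq_fintype_card] at hle
    omega
  obtain ⟨u, hu⟩ := not_isTotalDominatingSet_compl_iff.mp hS
  exact ⟨u, by rwa [← coe_subset, coe_neighborFinset, coe_pair]⟩

end PairsContainNeighborhoods

theorem two_mul_ncard_edgeSet_sub_le {V : Type*} [Fintype V] [DecidableEq V] {G : SimpleGraph V}
    {F : Set (Sym2 V)} (hF : F ⊆ G.edgeSet) (hG : NoIsolatedVerts (G.deleteEdges F))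
    (hγ : Fintype.card V - 1 ≤ totalDominationNumber (G.deleteEdges F)) :
    2 * (G.edgeSet.ncard - F.ncard) ≤ Fintype.card V + 3 := by
  classical
  have h := two_mul_card_edgeFinset_le hG hγ
  rwa [← Set.ncard_coe_finset, coe_edgeFinset, edgeSet_deleteEdges, Set.ncard_sdiff hF] at h
section FiberCliques

variable {V β : Type*}

def fiberCliques (f : V → β) : SimpleGraph V where
  Adj v w := v ≠ w ∧ f v = f w
  symm := ⟨fun _ _ h ↦ ⟨h.1.symm, h.2.symm⟩⟩
  loopless := ⟨fun _ h ↦ h.1 rfl⟩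

@[simp]
theorem fiberCliques_adj {f : V → β} {v w : V} :
    (fiberCliques f).Adj v w ↔ v ≠ w ∧ f v = f w :=
  Iff.rfl

theorem two_mul_card_image_le_ncard [Fintype V] [DecidableEq β] {f : V → β} {S : Set V}
    (hS : IsTotalDominatingSet (fiberCliques f) S) : 2 * #(univ.image f) ≤ S.ncard := by
  classical
  calc 2 * #(univ.image f) = ∑ _b ∈ univ.image f, 2 := by simp [mul_comm]
    _ ≤ ∑ b ∈ univ.image f, #{a ∈ S.toFinset | f a = b} := sum_le_sum fun b hb ↦ ?_
    _ = S.ncard := by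
      rw [Set.ncard_eq_toFinset_card',
        card_eq_sum_card_fiberwise (f := f) (t := univ.image f) (by simp [Set.MapsTo])]
  obtain ⟨v, -, rfl⟩ := mem_image.mp hb
  obtain ⟨u, huS, -, hvu⟩ := hS v
  obtain ⟨w, hwS, huw, huw'⟩ := hS u
  calc 2 = #{u, w} := (card_pair huw).symm
    _ ≤ _ := card_le_card fun x hx ↦ by
      rcases mem_insert.mp hx with rfl | hx
      · simp [*]
      · simp [mem_singleton.mp hx, *]

end FiberCliques

section Wheel

variable {n : ℕ}

@[simp]
theorem wheelGraph_adj_none_some (i : Fin n) : (wheelGraph n).Adj none (some i) := by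
  simp [wheelGraph]

@[simp]
theorem wheelGraph_adj_some_none (i : Fin n) : (wheelGraph n).Adj (some i) none :=
  (wheelGraph_adj_none_some i).symm

@[simp]
theorem wheelGraph_adj_some_some {i j : Fin n} :
    (wheelGraph n).Adj (some i) (some j) ↔ (cycleGraph n).Adj i j := by
  simp only [wheelGraph, fromRel_adj, reduceCtorEq, Option.some.injEq, exists_and_left,
    exists_eq_left', false_or, ne_eq]
  exact ⟨fun h ↦ h.2.elim id .symm, fun h ↦ ⟨h.ne, .inl h⟩⟩

theorem degree_wheelGraph_none [DecidableRel (wheelGraph n).Adj] :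
    (wheelGraph n).degree none = n := by
  rw [← card_neighborFinset_eq_degree]
  convert card_map (s := (univ : Finset (Fin n))) Function.Embedding.some using 2
  · ext (_ | i) <;> simp
  · simp

theorem degree_wheelGraph_some (hn : 3 ≤ n) [DecidableRel (wheelGraph n).Adj] (i : Fin n) :
    (wheelGraph n).degree (some i) = 3 := by
  classical
  obtain ⟨m, rfl⟩ : ∃ m, n = m + 3 := ⟨n - 3, by omega⟩
  rw [← card_neighborFinset_eq_degree]
  convert card_insert_of_notMem (a := none)
    (s := ((cycleGraph (m + 3)).neighborFinset i).map Function.Embedding.some) (by simp) using 2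
  · ext (_ | j) <;> simp
  · simp [cycleGraph_degree_three_le]

theorem ncard_edgeSet_wheelGraph (hn : 3 ≤ n) : (wheelGraph n).edgeSet.ncard = 2 * n := by
  classical
  have h := sum_degrees_eq_twice_card_edges (wheelGraph n)
  simp only [Fintype.sum_option, degree_wheelGraph_none, degree_wheelGraph_some hn, sum_const,
    card_univ, Fintype.card_fin, smul_eq_mul] at h
  rw [← coe_edgeFinset, Set.ncard_coe_finset]
  omega

theorem noIsolatedVerts_wheelGraph (hn : 1 ≤ n) : NoIsolatedVerts (wheelGraph n)
  | none => ⟨some ⟨0, hn⟩, by simp⟩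
  | some _ => ⟨none, by simp⟩

theorem totalDominationNumber_wheelGraph (hn : 1 ≤ n) :
    totalDominationNumber (wheelGraph n) = 2 := by
  have hS : IsTotalDominatingSet (wheelGraph n) {none, some ⟨0, hn⟩}
    | none => ⟨some ⟨0, hn⟩, by simp⟩
    | some _ => ⟨none, by simp⟩
  refine le_antisymm ?_ (le_totalDominationNumber (noIsolatedVerts_wheelGraph hn)
    fun _ ↦ two_le_ncard_of_isTotalDominatingSet)
  simpa [Set.ncard_pair] using totalDominationNumber_le hS

def wheelBlock : Option (Fin n) → ℕ
  | none => 0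
  | some i => i / 2

theorem fiberCliques_wheelBlock_le : fiberCliques (wheelBlock (n := n)) ≤ wheelGraph n := by
  rintro (_ | i) (_ | j) ⟨hne, hb⟩
  · exact absurd rfl hne
  · simp
  · simp
  · simp only [wheelBlock, ne_eq, Option.some.injEq, Fin.ext_iff] at hne hb
    rw [wheelGraph_adj_some_some, cycleGraph_adj']
    rcases Nat.lt_or_gt_of_ne hne with h | h
    · right; rw [Fin.sub_val_of_le h.le]; omega
    · left; rw [Fin.sub_val_of_le h.le]; omega

theorem image_wheelBlock (hn : 2 ≤ n) (hpar : Even n) :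
    univ.image (wheelBlock (n := n)) = range (n / 2) := by
  obtain ⟨m, rfl⟩ := hpar
  ext k
  simp only [mem_image, mem_univ, true_and, mem_range]
  constructor
  · rintro ⟨_ | i, rfl⟩ <;> simp only [wheelBlock] <;> omega
  · exact fun hk ↦ ⟨some ⟨2 * k, by omega⟩, by simp [wheelBlock]⟩

theorem noIsolatedVerts_fiberCliques_wheelBlock (hn : 2 ≤ n) (hpar : Even n) :
    NoIsolatedVerts (fiberCliques (wheelBlock (n := n))) := by
  obtain ⟨m, rfl⟩ := hpar
  rintro (_ | i)
  · exact ⟨some ⟨1, by omega⟩, by simp [wheelBlock]⟩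
  · refine ⟨some ⟨2 * (i / 2) + (1 - i % 2), by omega⟩, ?_⟩
    simp only [fiberCliques_adj, ne_eq, Option.some.injEq, Fin.ext_iff, wheelBlock]
    omega

theorem add_four_le_two_mul_ncard_edgeSet_fiberCliques_wheelBlock (hn : 2 ≤ n)
    (hpar : Even n) : n + 4 ≤ 2 * (fiberCliques (wheelBlock (n := n))).edgeSet.ncard := by
  classical
  set H := fiberCliques (wheelBlock (n := n))
  set T : Finset (Option (Fin n)) := {none, some ⟨0, by omega⟩, some ⟨1, by omega⟩}
  have hT : #T = 3 := by simp [T]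
  have hdegT : ∀ v ∈ T, 2 ≤ H.degree v := fun v hv ↦ by
    rw [← card_neighborFinset_eq_degree, show 2 = #(T.erase v) by rw [card_erase_of_mem hv, hT]]
    refine card_le_card fun w hw ↦ ?_
    simp only [T, mem_erase, mem_insert, mem_singleton] at hv hw
    rw [mem_neighborFinset, fiberCliques_adj]
    rcases hv with rfl | rfl | rfl <;> rcases hw with ⟨hne, rfl | rfl | rfl⟩ <;>
      simp_all [wheelBlock]
  have hdeg : ∀ v, 1 ≤ H.degree v := fun v ↦ by
    obtain ⟨w, hw⟩ := noIsolatedVerts_fiberCliques_wheelBlock hn hpar v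
    exact card_pos.mpr ⟨w, (mem_neighborFinset _ _ _).mpr hw⟩
  have hsum : 2 * #T + #Tᶜ ≤ ∑ v, H.degree v := by
    rw [← sum_add_sum_compl T]
    gcongr
    · exact (by simp [mul_comm] : 2 * #T = ∑ _v ∈ T, 2).le.trans (sum_le_sum hdegT)
    · exact card_eq_sum_ones Tᶜ ▸ sum_le_sum fun v _ ↦ hdeg v
  rw [sum_degrees_eq_twice_card_edges, card_compl, Fintype.card_option, Fintype.card_fin, hT]
    at hsum
  rw [← coe_edgeFinset, Set.ncard_coe_finset]
  omega

theorem exists_deleteEdges_wheelGraph_le_totalDominationNumber (hn : 4 ≤ n)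
    (hpar : Even n) :
    ∃ F ⊆ (wheelGraph n).edgeSet, F.ncard ≤ 2 * n - (n + 4) / 2 ∧
      NoIsolatedVerts ((wheelGraph n).deleteEdges F) ∧
      n ≤ totalDominationNumber ((wheelGraph n).deleteEdges F) := by
  have hHW := fiberCliques_wheelBlock_le (n := n)
  refine ⟨(wheelGraph n).edgeSet \ (fiberCliques wheelBlock).edgeSet, Set.sdiff_subset, ?_, ?_⟩
  · have := add_four_le_two_mul_ncard_edgeSet_fiberCliques_wheelBlock (by omega) hpar
    rw [Set.ncard_sdiff (edgeSet_mono hHW), ncard_edgeSet_wheelGraph (by omega)]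
    omega
  rw [deleteEdges_sdiff_eq_of_le hHW]
  have hH := noIsolatedVerts_fiberCliques_wheelBlock (by omega) hpar
  refine ⟨hH, le_totalDominationNumber hH fun S hS ↦ ?_⟩
  have := two_mul_card_image_le_ncard hS
  rw [image_wheelBlock (by omega) hpar, card_range] at this
  obtain ⟨m, rfl⟩ := hpar
  omega

end Wheel

/-- For even `n ≥ 4`, removing edges from the wheel `W_n` can increase the total
domination number by at most `n − 2` (i.e. up to `n`), and
`b_t^{n−2}(W_n) = 2n − (n+4)/2`. -/
theorem kTotalBondage_wheelGraph_even (n : ℕ) (hn : 4 ≤ n) (hpar : Even n) :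
    (∀ F : Set (Sym2 (Option (Fin n))), F ⊆ (wheelGraph n).edgeSet →
      NoIsolatedVerts ((wheelGraph n).deleteEdges F) →
      totalDominationNumber ((wheelGraph n).deleteEdges F) ≤
        totalDominationNumber (wheelGraph n) + (n - 2)) ∧
    totalDominationNumber (wheelGraph n) + (n - 2) = n ∧
    kTotalBondage (wheelGraph n) (n - 2) = 2 * n - (n + 4) / 2 := by
  classical
  have hγ : totalDominationNumber (wheelGraph n) + (n - 2) = n := by
    rw [totalDominationNumber_wheelGraph (by omega)]
    omega
  have hcard : Fintype.card (Option (Fin n)) = n + 1 := by simp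
  refine ⟨fun F _ hF ↦ ?_, hγ, ?_⟩
  · have := totalDominationNumber_le_card_sub_one (hcard ▸ hpar.add_one) hF
    omega
  refine kTotalBondage_eq (by simpa only [hγ] using
    exists_deleteEdges_wheelGraph_le_totalDominationNumber hn hpar) fun F hF hG hγF ↦ ?_
  rw [hγ] at hγF
  have := two_mul_ncard_edgeSet_sub_le hF hG (by omega)
  rw [ncard_edgeSet_wheelGraph (by omega)] at this
  obtain ⟨m, rfl⟩ := hpar
  omega
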